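/- arXiv:2212.11954 — 3 statements merged into one kernel-verified Lean document; each statement's English description precedes it below -/
import Mathlib

section
/- Let P = (X, ≺) be a finite poset, t ∈ ℕ, z ∈ X, k ≥ 0, and a, b ≥ 1 integers with k + a + b ≤ t. Then Ω(P,t;z,k+a)·Ω(P,t;z,k+b) ≥ Ω(P,t;z,k)·Ω(P,t;z,k+a+b), where Ω(P,t;z,m) is the number of order-preserving maps f : X → {0,…,t} with f(z) = m. -/
/-- `Ω(P,t;z,m)`: the number of order-preserving maps `f : α → {0,…,t}` with `f(z) = m`. -/
noncomputable def orderPolyAt {α : Type*} [PartialOrder α] (t : ℕ) (z : α) (m : ℕ) : ℕ :=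
  Nat.card {f : α → Fin (t + 1) //
    (∀ a b : α, a ≤ b → f a ≤ f b) ∧ (f z : ℕ) = m}

/-!
Order-preserving maps `α → ℕ` form a distributive lattice under pointwise `⊔` and `⊓`. Shift the
maps with `f z = k` up by `a`; the join of such a map with a map having `f z = k + a + b` is a
shifted map with `f z = k + b`, and their meet is a map with `f z = k + a`. Daykin's inequality
`#A * #B ≤ #(A ⊼ B) * #(A ⊻ B)` then gives the claim.
-/

open Finset FinsetFamily

section MonotoneMapsAt

variable {α β : Type*} [PartialOrder α] [Fintype α] [DecidableEq α]
  [Lattice β] [LocallyFiniteOrder β] [DecidableEq β]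

open scoped Classical in
noncomputable def monotoneMapsAt (lo hi : β) (z : α) (m : β) : Finset (α → β) :=
  {f ∈ Icc (fun _ => lo) (fun _ => hi) | Monotone f ∧ f z = m}

variable {lo hi lo' hi' m m' : β} {z : α}

theorem mem_monotoneMapsAt {f : α → β} :
    f ∈ monotoneMapsAt lo hi z m ↔ (∀ x, lo ≤ f x ∧ f x ≤ hi) ∧ Monotone f ∧ f z = m := by
  simp [monotoneMapsAt, Pi.le_def, forall_and]

theorem monotoneMapsAt_sups_subset :
    monotoneMapsAt lo hi z m ⊻ monotoneMapsAt lo' hi' z m' ⊆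
      monotoneMapsAt (lo ⊔ lo') (hi ⊔ hi') z (m ⊔ m') := by
  simp only [sups_subset_iff, mem_monotoneMapsAt]
  rintro f ⟨hf, hfm, rfl⟩ g ⟨hg, hgm, rfl⟩
  exact ⟨fun x => ⟨sup_le_sup (hf x).1 (hg x).1, sup_le_sup (hf x).2 (hg x).2⟩, hfm.sup hgm, rfl⟩

theorem monotoneMapsAt_infs_subset :
    monotoneMapsAt lo hi z m ⊼ monotoneMapsAt lo' hi' z m' ⊆
      monotoneMapsAt (lo ⊓ lo') (hi ⊓ hi') z (m ⊓ m') := by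
  simp only [infs_subset_iff, mem_monotoneMapsAt]
  rintro f ⟨hf, hfm, rfl⟩ g ⟨hg, hgm, rfl⟩
  exact ⟨fun x => ⟨inf_le_inf (hf x).1 (hg x).1, inf_le_inf (hf x).2 (hg x).2⟩, hfm.inf hgm, rfl⟩

theorem card_monotoneMapsAt_add (lo hi : ℕ) (z : α) (m a : ℕ) :
    #(monotoneMapsAt (lo + a) (hi + a) z (m + a)) = #(monotoneMapsAt lo hi z m) := by
  refine card_nbij' (· - fun _ => a) (· + fun _ => a) ?_ ?_ ?_ ?_ <;>
    simp only [Set.MapsTo, Set.LeftInvOn, mem_coe, mem_monotoneMapsAt]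
  · rintro f ⟨hf, hfm, hfz⟩
    refine ⟨fun x => ?_, fun x y hxy => Nat.sub_le_sub_right (hfm hxy) a, ?_⟩ <;>
      simp only [Pi.sub_apply] <;> grind
  · rintro f ⟨hf, hfm, hfz⟩
    refine ⟨fun x => ?_, hfm.add_const a, ?_⟩ <;> simp only [Pi.add_apply] <;> grind
  · rintro f ⟨hf, -, -⟩
    funext x
    simp only [Pi.add_apply, Pi.sub_apply]
    grind
  · simp

theorem orderPolyAt_eq_card_monotoneMapsAt (t : ℕ) (z : α) (m : ℕ) :
    orderPolyAt t z m = #(monotoneMapsAt 0 t z m) := by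
  rw [orderPolyAt, ← Nat.card_eq_finsetCard]
  refine Nat.card_congr
    { toFun f := ⟨fun x => f.1 x, mem_monotoneMapsAt.2 ⟨fun x => ⟨Nat.zero_le _, Fin.is_le _⟩,
        fun x y hxy => f.2.1 x y hxy, f.2.2⟩⟩
      invFun g := ⟨fun x => ⟨g.1 x, Nat.lt_succ_of_le ((mem_monotoneMapsAt.1 g.2).1 x).2⟩,
        fun x y hxy => (mem_monotoneMapsAt.1 g.2).2.1 hxy, (mem_monotoneMapsAt.1 g.2).2.2⟩
      left_inv _ := rfl
      right_inv _ := rfl }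

end MonotoneMapsAt

theorem daykin_daykin_paterson_strong_general {α : Type*} [Fintype α] [PartialOrder α]
    (t : ℕ) (z : α) (k a b : ℕ) :
    orderPolyAt (α := α) t z (k + a) * orderPolyAt (α := α) t z (k + b) ≥
      orderPolyAt (α := α) t z k * orderPolyAt (α := α) t z (k + a + b) := by
  classical
  set S : ℕ → ℕ → ℕ → Finset (α → ℕ) := fun lo hi m => monotoneMapsAt lo hi z m
  have hinf : S (0 + a) (t + a) (k + a) ⊼ S 0 t (k + a + b) ⊆ S 0 t (k + a) := by
    convert monotoneMapsAt_infs_subset using 2 <;> simp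
  have hsup : S (0 + a) (t + a) (k + a) ⊻ S 0 t (k + a + b) ⊆ S (0 + a) (t + a) (k + b + a) := by
    convert monotoneMapsAt_sups_subset using 2 <;> simp [Nat.add_right_comm]
  simp only [orderPolyAt_eq_card_monotoneMapsAt, ge_iff_le]
  rw [← card_monotoneMapsAt_add 0 t z k a, ← card_monotoneMapsAt_add 0 t z (k + b) a]
  calc _ ≤ _ := le_card_infs_mul_card_sups _ _
    _ ≤ _ := Nat.mul_le_mul (card_le_card hinf) (card_le_card hsup)

/-- **Strong form of the Daykin–Daykin–Paterson inequality.** -/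
theorem daykin_daykin_paterson_strong {α : Type*} [Fintype α] [PartialOrder α]
    (t : ℕ) (z : α) (k a b : ℕ) (ha : 1 ≤ a) (hb : 1 ≤ b) (h : k + a + b ≤ t) :
    orderPolyAt (α := α) t z (k + a) * orderPolyAt (α := α) t z (k + b) ≥
      orderPolyAt (α := α) t z k * orderPolyAt (α := α) t z (k + a + b) :=
  daykin_daykin_paterson_strong_general t z k a b
end

section
/- Let P = (X, ≺) be a finite poset and t ≥ 1. Then Ω(P,t)² ≥ Ω(P,t−1)·Ω(P,t+1), where Ω(P,s) is the number of order-preserving maps from X to {0,…,s}. More generally, for integers a,b ≥ 1, Ω(P,t+a)·Ω(P,t+b) ≥ Ω(P,t)·Ω(P,t+a+b). -/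
/-- `Ω(P,s)`: the number of order-preserving maps `f : α → {0,…,s}`. -/
noncomputable def orderPoly {α : Type*} [PartialOrder α] (s : ℕ) : ℕ :=
  Nat.card {f : α → Fin (s + 1) // ∀ a b : α, a ≤ b → f a ≤ f b}

/-!
Order-preserving maps `α → ℤ` form a distributive lattice under pointwise `max`/`min`, so Daykin's
inequality `|A| |B| ≤ |A ⊼ B| |A ⊻ B|` applies. Take `A` the maps into `[0, t]` (counted by `Ω(t)`)
and `B` the maps into `[-b, t + a]` (a shift of those counted by `Ω(t + a + b)`): then `A ⊻ B`
consists of maps into `[0, t + a]` and `A ⊼ B` of maps into `[-b, t]`, counted by `Ω(t + a)` and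
`Ω(t + b)`. Log-concavity is the case `a = b = 1`.
-/

open scoped SetFamily

theorem Set.ncard_mul_ncard_le_ncard_infs_mul_ncard_sups {L : Type*} [DistribLattice L]
    (s t : Set L) : s.ncard * t.ncard ≤ (s ⊼ t).ncard * (s ⊻ t).ncard := by
  classical
  rcases s.finite_or_infinite with hs | hs
  · rcases t.finite_or_infinite with ht | ht
    · lift s to Finset L using hs
      lift t to Finset L using ht
      simpa only [← Finset.coe_infs, ← Finset.coe_sups, Set.ncard_coe_finset]
        using Finset.le_card_infs_mul_card_sups s t
    · simp [ht.ncard]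
  · simp [hs.ncard]

def monotoneIcc (α : Type*) {β : Type*} [Preorder α] [Preorder β] (lo hi : β) : Set (α → β) :=
  {f | Monotone f ∧ ∀ x, f x ∈ Set.Icc lo hi}

section monotoneIcc

variable {α β : Type*} [Preorder α]

theorem monotoneIcc_subset_monotoneIcc [Preorder β] {lo₁ hi₁ lo₂ hi₂ : β} (hlo : lo₂ ≤ lo₁)
    (hhi : hi₁ ≤ hi₂) : monotoneIcc α lo₁ hi₁ ⊆ monotoneIcc α lo₂ hi₂ :=
  fun _ hf => ⟨hf.1, fun x => ⟨hlo.trans (hf.2 x).1, (hf.2 x).2.trans hhi⟩⟩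

variable [Lattice β]

theorem monotoneIcc_sups_subset (lo₁ hi₁ lo₂ hi₂ : β) :
    monotoneIcc α lo₁ hi₁ ⊻ monotoneIcc α lo₂ hi₂ ⊆ monotoneIcc α (lo₁ ⊔ lo₂) (hi₁ ⊔ hi₂) := by
  rintro _ ⟨f, ⟨hf, hfI⟩, g, ⟨hg, hgI⟩, rfl⟩
  exact ⟨hf.sup hg, fun x => ⟨sup_le_sup (hfI x).1 (hgI x).1, sup_le_sup (hfI x).2 (hgI x).2⟩⟩

theorem monotoneIcc_infs_subset (lo₁ hi₁ lo₂ hi₂ : β) :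
    monotoneIcc α lo₁ hi₁ ⊼ monotoneIcc α lo₂ hi₂ ⊆ monotoneIcc α (lo₁ ⊓ lo₂) (hi₁ ⊓ hi₂) := by
  rintro _ ⟨f, ⟨hf, hfI⟩, g, ⟨hg, hgI⟩, rfl⟩
  exact ⟨hf.inf hg, fun x => ⟨inf_le_inf (hfI x).1 (hgI x).1, inf_le_inf (hfI x).2 (hgI x).2⟩⟩

end monotoneIcc

theorem orderPoly_eq_ncard_monotoneIcc {α : Type*} [PartialOrder α] {s : ℕ} {lo hi : ℤ}
    (h : lo + s = hi) : orderPoly (α := α) s = (monotoneIcc α lo hi).ncard := by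
  rw [← Nat.card_coe_set_eq]
  refine Nat.card_congr
    { toFun := fun f => ⟨fun x => lo + (f.1 x : ℕ), fun x y hxy => ?_, fun x => ?_⟩
      invFun := fun g => ⟨fun x => ⟨(g.1 x - lo).toNat, ?_⟩, fun x y hxy => ?_⟩
      left_inv := fun f => ?_
      right_inv := fun g => ?_ }
  · have := Fin.le_def.mp (f.2 x y hxy); simp only; omega
  · have := (f.1 x).isLt; simp only [Set.mem_Icc]; omega
  · have := (g.2.2 x).2; omega
  · have := g.2.1 hxy; simp only [Fin.mk_le_mk]; omega
  · ext x; simp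
  · ext x; have := (g.2.2 x).1; simp only; omega

theorem orderPoly_mul_orderPoly_le {α : Type*} [PartialOrder α] (t a b : ℕ) :
    orderPoly (α := α) t * orderPoly (α := α) (t + a + b) ≤
      orderPoly (α := α) (t + a) * orderPoly (α := α) (t + b) := by
  set small := monotoneIcc α (0 : ℤ) t
  set big := monotoneIcc α (-b : ℤ) (t + a)
  have hsmall : orderPoly (α := α) t = small.ncard := orderPoly_eq_ncard_monotoneIcc (by simp)
  have hbig : orderPoly (α := α) (t + a + b) = big.ncard :=
    orderPoly_eq_ncard_monotoneIcc (by push_cast; ring)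
  have hsup : orderPoly (α := α) (t + a) = (monotoneIcc α (0 : ℤ) (t + a)).ncard :=
    orderPoly_eq_ncard_monotoneIcc (by push_cast; ring)
  have hinf : orderPoly (α := α) (t + b) = (monotoneIcc α (-b : ℤ) t).ncard :=
    orderPoly_eq_ncard_monotoneIcc (by push_cast; ring)
  rcases big.finite_or_infinite with hfin | hinfinite
  · have hsups : small ⊻ big ⊆ monotoneIcc α (0 : ℤ) (t + a) :=
      (monotoneIcc_sups_subset _ _ _ _).trans_eq (by congr 1 <;> omega)
    have hinfs : small ⊼ big ⊆ monotoneIcc α (-b : ℤ) t :=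
      (monotoneIcc_infs_subset _ _ _ _).trans_eq (by congr 1 <;> omega)
    calc orderPoly t * orderPoly (t + a + b)
        = small.ncard * big.ncard := by rw [hsmall, hbig]
      _ ≤ (small ⊼ big).ncard * (small ⊻ big).ncard :=
        Set.ncard_mul_ncard_le_ncard_infs_mul_ncard_sups small big
      _ ≤ (monotoneIcc α (-b : ℤ) t).ncard * (monotoneIcc α (0 : ℤ) (t + a)).ncard := by
        gcongr
        · exact hfin.subset (monotoneIcc_subset_monotoneIcc le_rfl (by omega))
        · exact hfin.subset (monotoneIcc_subset_monotoneIcc (by omega) le_rfl)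
      _ = orderPoly (t + a) * orderPoly (t + b) := by rw [hsup, hinf, mul_comm]
  · -- `ncard` of an infinite set is `0`, so the left side vanishes.
    simp [hbig, hinfinite.ncard]

theorem orderPoly_log_concave_general {α : Type*} [PartialOrder α]
    (t : ℕ) (ht : 1 ≤ t) :
    (orderPoly (α := α) t * orderPoly (α := α) t ≥
        orderPoly (α := α) (t - 1) * orderPoly (α := α) (t + 1)) ∧
      ∀ a b : ℕ, 1 ≤ a → 1 ≤ b →
        orderPoly (α := α) (t + a) * orderPoly (α := α) (t + b) ≥
          orderPoly (α := α) t * orderPoly (α := α) (t + a + b) := by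
  obtain ⟨s, rfl⟩ : ∃ s, t = s + 1 := ⟨t - 1, by omega⟩
  exact ⟨by simpa using orderPoly_mul_orderPoly_le (α := α) s 1 1,
    fun a b _ _ => orderPoly_mul_orderPoly_le _ a b⟩

/-- **Log-concavity of the order polynomial (Daykin–Daykin–Paterson / CPP).** -/
theorem orderPoly_log_concave {α : Type*} [Fintype α] [PartialOrder α]
    (t : ℕ) (ht : 1 ≤ t) :
    (orderPoly (α := α) t * orderPoly (α := α) t ≥
        orderPoly (α := α) (t - 1) * orderPoly (α := α) (t + 1)) ∧
      ∀ a b : ℕ, 1 ≤ a → 1 ≤ b →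
        orderPoly (α := α) (t + a) * orderPoly (α := α) (t + b) ≥
          orderPoly (α := α) t * orderPoly (α := α) (t + a + b) :=
  orderPoly_log_concave_general t ht
end

section
/- Let P = (X, ≺) be a finite poset with X = {x₁,…,x_n}, and t ≥ 1. Define Ω_q(P,s) := Σ_f q₁^{f(x₁)}⋯q_n^{f(x_n)} summed over order-preserving maps f : X → {0,…,s}. Then for all integers a, b ≥ 1, the polynomial Ω_q(P,t+a)·Ω_q(P,t+b) − Ω_q(P,t)·Ω_q(P,t+a+b) in q₁,…,q_n has all nonnegative coefficients. -/
/-!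
The coefficient of `q^d` in `Ω(s₁) Ω(s₂)` counts the pairs `(f, g)` of order-preserving maps with
`f ≤ s₁`, `g ≤ s₂` and `f + g = d`, so it suffices to inject the pairs for `(t, t + a + b)` into
those for `(t + a, t + b)`. Put `u = f + b` and `v = g`. Call `x ≤ z` a conflict when
`u z < v x`: exchanging `u` and `v` at only one of `x`, `z` would break monotonicity. Let `R` be
the smallest set containing `{v > t + b}` and closed under conflicts, and exchange `u` and `v` on
`R`. No conflict leaves `R`, so both new maps are monotone, and they satisfy the new bounds. The
region of the image pair, with the roles of the two maps exchanged, is `R` again, so the map can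
be undone and is injective.
-/

open scoped Classical in
/-- The multivariate order polynomial `Ω_q(P,s) = Σ_f Π_x q_x^{f(x)}`, summed over
order-preserving maps `f : α → {0,…,s}`, one variable `q_x` per element. -/
noncomputable def multiOrderPoly {α : Type*} [Fintype α] [PartialOrder α]
    (s : ℕ) : MvPolynomial α ℤ :=
  ∑ f ∈ Finset.univ.filter
      (fun f : α → Fin (s + 1) => ∀ a b : α, a ≤ b → f a ≤ f b),
    ∏ x : α, MvPolynomial.X x ^ (f x : ℕ)

open Finset

inductive SwapRegion {α : Type*} [Preorder α] (u v : α → ℕ) (c : ℕ) : α → Prop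
  | base {x : α} : c < v x → SwapRegion u v c x
  | down {x z : α} : x ≤ z → SwapRegion u v c z → u z < v x → SwapRegion u v c x
  | up {x z : α} : z ≤ x → SwapRegion u v c z → u x < v z → SwapRegion u v c x

namespace SwapRegion

variable {α : Type*} [Preorder α] {u v : α → ℕ} {c : ℕ} {x : α}

theorem apply_le_apply (hu : Monotone u) (hv : Monotone v) (huc : ∀ x, u x ≤ c)
    (hx : SwapRegion u v c x) : u x ≤ v x := by
  induction hx with
  | base h => exact (huc _).trans h.le
  | down hxz _ h _ => exact (hu hxz).trans h.le
  | up hzx _ h _ => exact h.le.trans (hv hzx)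

end SwapRegion

section regionSwap

open scoped Classical

variable {α : Type*} [Preorder α] {c : ℕ} {p : (α → ℕ) × (α → ℕ)}

theorem le_of_not_swapRegion {u v : α → ℕ} {x : α} (hx : ¬SwapRegion u v c x) : v x ≤ c :=
  not_lt.1 fun h => hx (.base h)

noncomputable def regionSwap (c : ℕ) (p : (α → ℕ) × (α → ℕ)) : (α → ℕ) × (α → ℕ) :=
  (fun x => if SwapRegion p.1 p.2 c x then p.2 x else p.1 x,
    fun x => if SwapRegion p.1 p.2 c x then p.1 x else p.2 x)

theorem regionSwap_fst_apply (x : α) :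
    (regionSwap c p).1 x = if SwapRegion p.1 p.2 c x then p.2 x else p.1 x :=
  rfl

theorem regionSwap_snd_apply (x : α) :
    (regionSwap c p).2 x = if SwapRegion p.1 p.2 c x then p.1 x else p.2 x :=
  rfl

theorem regionSwap_add : (regionSwap c p).1 + (regionSwap c p).2 = p.1 + p.2 := by
  ext x
  simp only [Pi.add_apply, regionSwap_fst_apply, regionSwap_snd_apply]
  split_ifs <;> omega

theorem le_regionSwap_fst (h₁ : Monotone p.1) (h₂ : Monotone p.2) (hc : ∀ x, p.1 x ≤ c)
    (x : α) : p.1 x ≤ (regionSwap c p).1 x := by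
  rw [regionSwap_fst_apply]
  split_ifs with hx
  exacts [hx.apply_le_apply h₁ h₂ hc, le_rfl]

theorem regionSwap_fst_le {C : ℕ} (hc : ∀ x, p.1 x ≤ c) (hcC : c ≤ C) (hC : ∀ x, p.2 x ≤ C)
    (x : α) : (regionSwap c p).1 x ≤ C := by
  rw [regionSwap_fst_apply]
  split_ifs
  exacts [hC x, (hc x).trans hcC]

theorem regionSwap_snd_le (hc : ∀ x, p.1 x ≤ c) (x : α) : (regionSwap c p).2 x ≤ c := by
  rw [regionSwap_snd_apply]
  split_ifs with hx
  exacts [hc x, le_of_not_swapRegion hx]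

theorem monotone_regionSwap_fst (h₁ : Monotone p.1) (h₂ : Monotone p.2) (hc : ∀ x, p.1 x ≤ c) :
    Monotone (regionSwap c p).1 := by
  intro x y hxy
  rw [regionSwap_fst_apply, regionSwap_fst_apply]
  split_ifs with hx hy hy
  · exact h₂ hxy
  · exact not_lt.1 fun h => hy (.up hxy hx h)
  · exact (h₁ hxy).trans (hy.apply_le_apply h₁ h₂ hc)
  · exact h₁ hxy

theorem monotone_regionSwap_snd (h₁ : Monotone p.1) (h₂ : Monotone p.2) (hc : ∀ x, p.1 x ≤ c) :
    Monotone (regionSwap c p).2 := by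
  intro x y hxy
  rw [regionSwap_snd_apply, regionSwap_snd_apply]
  split_ifs with hx hy hy
  · exact h₁ hxy
  · exact (hx.apply_le_apply h₁ h₂ hc).trans (h₂ hxy)
  · exact not_lt.1 fun h => hx (.down hxy hy h)
  · exact h₂ hxy

theorem swapRegion_regionSwap (h₁ : Monotone p.1) (h₂ : Monotone p.2) (hc : ∀ x, p.1 x ≤ c)
    (x : α) : SwapRegion (regionSwap c p).2 (regionSwap c p).1 c x ↔ SwapRegion p.1 p.2 c x := by
  constructor
  · intro hx
    induction hx with
    | @base x h =>
      by_contra hx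
      rw [regionSwap_fst_apply, if_neg hx] at h
      exact absurd h (not_lt.2 (hc x))
    | @down x z hxz hz h ih =>
      by_contra hx
      rw [regionSwap_snd_apply, regionSwap_fst_apply, if_neg hx, if_pos ih] at h
      exact absurd h (not_lt.2 (h₁ hxz))
    | @up x z hzx hz h ih =>
      by_contra hx
      rw [regionSwap_snd_apply, regionSwap_fst_apply, if_neg hx, if_pos ih] at h
      exact absurd h (not_lt.2 (h₂ hzx))
  · intro hx
    induction hx with
    | @base x h =>
      refine .base ?_
      rwa [regionSwap_fst_apply, if_pos (SwapRegion.base h)]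
    | @down x z hxz hz h ih =>
      refine .down hxz ih ?_
      rwa [regionSwap_snd_apply, regionSwap_fst_apply, if_pos hz, if_pos (.down hxz hz h)]
    | @up x z hzx hz h ih =>
      refine .up hzx ih ?_
      rwa [regionSwap_snd_apply, regionSwap_fst_apply, if_pos hz, if_pos (.up hzx hz h)]

theorem swap_regionSwap_swap_regionSwap (h₁ : Monotone p.1) (h₂ : Monotone p.2)
    (hc : ∀ x, p.1 x ≤ c) : (regionSwap c (regionSwap c p).swap).swap = p := by
  ext x <;>
  · simp only [Prod.fst_swap, Prod.snd_swap, regionSwap_fst_apply, regionSwap_snd_apply,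
      swapRegion_regionSwap h₁ h₂ hc]
    split_ifs <;> rfl

theorem injOn_regionSwap :
    Set.InjOn (regionSwap c)
      {p : (α → ℕ) × (α → ℕ) | Monotone p.1 ∧ Monotone p.2 ∧ ∀ x, p.1 x ≤ c} :=
  fun p ⟨hp₁, hp₂, hpc⟩ q ⟨hq₁, hq₂, hqc⟩ h => by
    rw [← swap_regionSwap_swap_regionSwap hp₁ hp₂ hpc, h,
      swap_regionSwap_swap_regionSwap hq₁ hq₂ hqc]

end regionSwap

section Counting

open scoped Classical

variable {α : Type*} [Fintype α] [Preorder α]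

noncomputable def monotoneLE (s : ℕ) : Finset (α → ℕ) :=
  {f ∈ Iic fun _ => s | Monotone f}

noncomputable def monotonePairs (s₁ s₂ : ℕ) (d : α → ℕ) :
    Finset ((α → ℕ) × (α → ℕ)) :=
  {p ∈ monotoneLE s₁ ×ˢ monotoneLE s₂ | p.1 + p.2 = d}

theorem mem_monotoneLE {s : ℕ} {f : α → ℕ} :
    f ∈ monotoneLE s ↔ (∀ x, f x ≤ s) ∧ Monotone f := by
  simp only [monotoneLE, mem_filter, mem_Iic, Pi.le_def]

theorem mem_monotonePairs {s₁ s₂ : ℕ} {d : α → ℕ} {p : (α → ℕ) × (α → ℕ)} :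
    p ∈ monotonePairs s₁ s₂ d ↔ Monotone p.1 ∧ Monotone p.2 ∧ (∀ x, p.1 x ≤ s₁) ∧
      (∀ x, p.2 x ≤ s₂) ∧ p.1 + p.2 = d := by
  simp only [monotonePairs, mem_filter, mem_product, mem_monotoneLE]
  tauto

theorem card_monotonePairs_le (t a b : ℕ) (d : α → ℕ) :
    #(monotonePairs t (t + a + b) d) ≤ #(monotonePairs (t + a) (t + b) d) := by
  let shift : (α → ℕ) × (α → ℕ) → (α → ℕ) × (α → ℕ) := fun p => (fun x => p.1 x + b, p.2)
  let φ : (α → ℕ) × (α → ℕ) → (α → ℕ) × (α → ℕ) := fun p =>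
    (fun x => (regionSwap (t + b) (shift p)).1 x - b, (regionSwap (t + b) (shift p)).2)
  have hshift : ∀ p ∈ monotonePairs t (t + a + b) d, Monotone (shift p).1 ∧
      Monotone (shift p).2 ∧ ∀ x, (shift p).1 x ≤ t + b := by
    intro p hp
    obtain ⟨h₁, h₂, ht, -⟩ := mem_monotonePairs.1 hp
    exact ⟨fun x y hxy => Nat.add_le_add_right (h₁ hxy) b, h₂, fun x => by simp [shift, ht x]⟩
  have hge : ∀ p ∈ monotonePairs t (t + a + b) d, ∀ x, b ≤ (regionSwap (t + b) (shift p)).1 x :=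
    fun p hp x => le_add_self.trans
      (le_regionSwap_fst (hshift p hp).1 (hshift p hp).2.1 (hshift p hp).2.2 x)
  refine card_le_card_of_injOn φ (fun p hp => ?_) (fun p hp q hq hpq => ?_)
  · obtain ⟨h₁, h₂, hc⟩ := hshift p hp
    obtain ⟨-, -, -, hs, hd⟩ := mem_monotonePairs.1 hp
    refine mem_monotonePairs.2
      ⟨fun x y hxy => Nat.sub_le_sub_right (monotone_regionSwap_fst h₁ h₂ hc hxy) b,
        monotone_regionSwap_snd h₁ h₂ hc, fun x => ?_, regionSwap_snd_le hc, funext fun x => ?_⟩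
    · have hle := regionSwap_fst_le hc (by omega : t + b ≤ t + a + b) hs x
      simp only [φ]
      omega
    · have hsum := congrFun (regionSwap_add (c := t + b) (p := shift p)) x
      have hdx := congrFun hd x
      have hbx := hge p hp x
      simp only [φ, shift, Pi.add_apply] at hsum hdx hbx ⊢
      omega
  · have hswap : regionSwap (t + b) (shift p) = regionSwap (t + b) (shift q) := by
      refine Prod.ext (funext fun x => ?_) (Prod.ext_iff.1 hpq).2
      have hx := congrFun (Prod.ext_iff.1 hpq).1 x
      have hpx := hge p hp x
      have hqx := hge q hq x
      simp only [φ] at hx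
      omega
    have hpq' := Prod.ext_iff.1 (injOn_regionSwap (hshift p hp) (hshift q hq) hswap)
    exact Prod.ext (funext fun x => Nat.add_right_cancel (congrFun hpq'.1 x)) hpq'.2

end Counting

section Polynomial

open scoped Classical

open MvPolynomial

variable {α : Type*} [Fintype α] [PartialOrder α]

theorem multiOrderPoly_eq_sum (s : ℕ) :
    multiOrderPoly (α := α) s =
      ∑ f ∈ monotoneLE (α := α) s, ∏ x, (X x : MvPolynomial α ℤ) ^ f x := by
  have hval : ∀ f ∈ monotoneLE (α := α) s, ∀ x, (Fin.ofNat (s + 1) (f x) : ℕ) = f x :=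
    fun f hf x => Nat.mod_eq_of_lt (Nat.lt_succ_of_le ((mem_monotoneLE.1 hf).1 x))
  refine sum_nbij' (fun f x => (f x : ℕ)) (fun f x => Fin.ofNat (s + 1) (f x)) ?_ ?_ ?_ ?_ ?_
  · intro f hf
    exact mem_monotoneLE.2 ⟨fun x => Fin.is_le (f x), fun x y hxy => (mem_filter.1 hf).2 x y hxy⟩
  · intro f hf
    refine mem_filter.2 ⟨mem_univ _, fun x y hxy => ?_⟩
    rw [Fin.le_iff_val_le_val, hval f hf, hval f hf]
    exact (mem_monotoneLE.1 hf).2 hxy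
  · exact fun f _ => funext fun x => Fin.ofNat_val_eq_self (f x)
  · exact fun f hf => funext (hval f hf)
  · exact fun f _ => rfl

theorem coeff_multiOrderPoly_mul (s₁ s₂ : ℕ) (d : α →₀ ℕ) :
    coeff d (multiOrderPoly (α := α) s₁ * multiOrderPoly (α := α) s₂) =
      #(monotonePairs s₁ s₂ ⇑d) := by
  have hd : ∀ f : α → ℕ, d = Finsupp.indicator univ (fun x _ => f x) ↔ f = d := by
    intro f
    simp [Finsupp.ext_iff, funext_iff, eq_comm]
  simp only [multiOrderPoly_eq_sum, sum_mul_sum, ← sum_product', ← prod_mul_distrib, ← pow_add,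
    coeff_sum, coeff_prod_X_pow, hd]
  rw [sum_boole]
  rfl

end Polynomial

theorem multiOrderPoly_log_concave_general {α : Type*} [Fintype α] [PartialOrder α]
    (t : ℕ) (a b : ℕ) :
    ∀ d : α →₀ ℕ,
      0 ≤ MvPolynomial.coeff d
        (multiOrderPoly (α := α) (t + a) * multiOrderPoly (α := α) (t + b)
          - multiOrderPoly (α := α) t * multiOrderPoly (α := α) (t + a + b)) := by
  intro d
  rw [MvPolynomial.coeff_sub, coeff_multiOrderPoly_mul, coeff_multiOrderPoly_mul, sub_nonneg]
  exact_mod_cast card_monotonePairs_le t a b d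

/-- **Multivariate log-concavity of the order polynomial.** -/
theorem multiOrderPoly_log_concave {α : Type*} [Fintype α] [PartialOrder α]
    (t : ℕ) (ht : 1 ≤ t) (a b : ℕ) (ha : 1 ≤ a) (hb : 1 ≤ b) :
    ∀ d : α →₀ ℕ,
      0 ≤ MvPolynomial.coeff d
        (multiOrderPoly (α := α) (t + a) * multiOrderPoly (α := α) (t + b)
          - multiOrderPoly (α := α) t * multiOrderPoly (α := α) (t + a + b)) :=
  multiOrderPoly_log_concave_general t a b
end
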